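/- There are exactly three quandle structures on a three-element set up to isomorphism: the trivial quandle E_3, the dihedral quandle R_3, and the quandle P_3. -/

import Mathlib

/-- A quandle structure on a type. -/
structure QuandleStr (α : Type*) where
  op : α → α → α
  idem : ∀ x, op x x = x
  bij : ∀ y, Function.Bijective fun x => op x y
  distrib : ∀ x y z, op (op x y) z = op (op x z) (op y z)

/-- The trivial quandle E₃ on Fin 3. -/
def E3 : QuandleStr (Fin 3) where
  op x _ := x
  idem := by intro x; rfl
  bij := by intro y; exact Function.bijective_id
  distrib := by intros; rfl

/-- The dihedral quandle R₃ on Fin 3. -/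
def R3 : QuandleStr (Fin 3) where
  op x y := 2 * y - x
  idem := by decide
  bij := by decide
  distrib := by decide

/-- The quandle P₃ on Fin 3. -/
def P3 : QuandleStr (Fin 3) where
  op x y := if y = 0 then (if x = 1 then 2 else if x = 2 then 1 else 0) else x
  idem := by decide
  bij := by decide
  distrib := by decide

/-- Isomorphism of quandle structures on Fin 3. -/
def QIso (q₁ q₂ : QuandleStr (Fin 3)) : Prop :=
  ∃ e : Fin 3 ≃ Fin 3, ∀ x y, e (q₁.op x y) = q₂.op (e x) (e y)

/-!
Each column map `x ↦ x ▷ y` is a permutation of `Fin 3` fixing `y`, hence either the identity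
or the transposition of the other two points, i.e. the column of `E₃` or of `R₃` at `y`. So a
quandle on `Fin 3` is determined by the set of points acting trivially. If `c` acts trivially,
so does `c ▷ z`, because `(w ▷ z) ▷ (c ▷ z) = (w ▷ c) ▷ z = w ▷ z`. Hence if `c` acts trivially
and `s` does not, the third point `c ▷ s` acts trivially too, and the set is all of `Fin 3`,
empty, or the complement of one point. Translations of `Fin 3` commute with `R₃`, which matches
these three cases with `E₃`, `R₃` and `P₃`; the number of trivially acting points tells them
apart.
-/

namespace QuandleStr

variable {α β : Type*}

def ActsTrivially (q : QuandleStr α) (y : α) : Prop :=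
  ∀ x, q.op x y = x

theorem ActsTrivially.op {q : QuandleStr α} {c : α} (hc : q.ActsTrivially c) (z : α) :
    q.ActsTrivially (q.op c z) := by
  intro x
  obtain ⟨w, rfl⟩ := (q.bij z).surjective x
  rw [← q.distrib, hc]

theorem actsTrivially_iff_of_map_op {q₁ : QuandleStr α} {q₂ : QuandleStr β} {e : α ≃ β}
    (he : ∀ x y, e (q₁.op x y) = q₂.op (e x) (e y)) (y : α) :
    q₁.ActsTrivially y ↔ q₂.ActsTrivially (e y) := by
  constructor
  · intro hy x
    rw [← e.apply_symm_apply x, ← he, hy]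
  · intro hy x
    apply e.injective
    rw [he, hy]

end QuandleStr

open QuandleStr

theorem QIso.forall_actsTrivially_iff {q₁ q₂ : QuandleStr (Fin 3)} (h : QIso q₁ q₂) :
    (∀ y, q₁.ActsTrivially y) ↔ ∀ y, q₂.ActsTrivially y :=
  let ⟨e, he⟩ := h
  e.forall_congr (actsTrivially_iff_of_map_op he)

theorem QIso.exists_actsTrivially_iff {q₁ q₂ : QuandleStr (Fin 3)} (h : QIso q₁ q₂) :
    (∃ y, q₁.ActsTrivially y) ↔ ∃ y, q₂.ActsTrivially y :=
  let ⟨e, he⟩ := h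
  e.exists_congr (actsTrivially_iff_of_map_op he)

theorem E3_actsTrivially (y : Fin 3) : E3.ActsTrivially y :=
  fun _ => rfl

theorem R3_not_actsTrivially (y : Fin 3) : ¬R3.ActsTrivially y := by
  unfold ActsTrivially
  revert y
  decide

theorem P3_actsTrivially_iff (y : Fin 3) : P3.ActsTrivially y ↔ y ≠ 0 := by
  unfold ActsTrivially
  revert y
  decide

theorem R3_op_sub_right (s x y : Fin 3) : R3.op (x - s) (y - s) = R3.op x y - s := by
  revert s x y
  decide

theorem eq_R3_op_of_ne {x y z : Fin 3} (hxy : x ≠ y) (hzx : z ≠ x) (hzy : z ≠ y) :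
    z = R3.op x y := by
  revert x y z
  decide

theorem Equiv.Perm.fin_three_eq_one_or_eq_R3_op {σ : Equiv.Perm (Fin 3)} {y : Fin 3}
    (hy : σ y = y) : σ = 1 ∨ ∀ x, σ x = R3.op x y := by
  revert σ y
  decide

theorem QuandleStr.op_eq_R3_op_of_not_actsTrivially {q : QuandleStr (Fin 3)} {y : Fin 3}
    (hy : ¬q.ActsTrivially y) (x : Fin 3) : q.op x y = R3.op x y := by
  obtain hσ | hσ := Equiv.Perm.fin_three_eq_one_or_eq_R3_op
    (σ := Equiv.ofBijective _ (q.bij y)) (q.idem y)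
  · exact absurd (fun x => DFunLike.congr_fun hσ x) hy
  · exact hσ x

theorem QuandleStr.actsTrivially_iff_ne {q : QuandleStr (Fin 3)} {c s : Fin 3}
    (hc : q.ActsTrivially c) (hs : ¬q.ActsTrivially s) (y : Fin 3) :
    q.ActsTrivially y ↔ y ≠ s := by
  refine ⟨fun hy hys => hs (hys ▸ hy), fun hys => ?_⟩
  by_cases hyc : y = c
  · exact hyc ▸ hc
  have hcs : c ≠ s := fun h => hs (h ▸ hc)
  rw [eq_R3_op_of_ne hcs hyc hys, ← op_eq_R3_op_of_not_actsTrivially hs]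
  exact hc.op s

theorem qIso_of_actsTrivially_iff (q₁ q₂ : QuandleStr (Fin 3)) (s : Fin 3)
    (h : ∀ y, q₁.ActsTrivially y ↔ q₂.ActsTrivially (y - s)) : QIso q₁ q₂ := by
  refine ⟨Equiv.subRight s, fun x y => ?_⟩
  simp only [Equiv.subRight_apply]
  by_cases hy : q₁.ActsTrivially y
  · rw [hy x, (h y).1 hy (x - s)]
  · rw [op_eq_R3_op_of_not_actsTrivially hy,
      op_eq_R3_op_of_not_actsTrivially (mt (h y).2 hy), R3_op_sub_right]

theorem qIso_E3_or_R3_or_P3 (q : QuandleStr (Fin 3)) : QIso q E3 ∨ QIso q R3 ∨ QIso q P3 := by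
  by_cases hall : ∀ y, q.ActsTrivially y
  · exact .inl <| qIso_of_actsTrivially_iff q E3 0 fun y =>
      iff_of_true (hall y) (E3_actsTrivially _)
  by_cases hnone : ∀ y, ¬q.ActsTrivially y
  · exact .inr <| .inl <| qIso_of_actsTrivially_iff q R3 0 fun y =>
      iff_of_false (hnone y) (R3_not_actsTrivially _)
  push Not at hall hnone
  obtain ⟨s, hs⟩ := hall
  obtain ⟨c, hc⟩ := hnone
  refine .inr <| .inr <| qIso_of_actsTrivially_iff q P3 s fun y => ?_
  rw [actsTrivially_iff_ne hc hs, P3_actsTrivially_iff, sub_ne_zero]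

/-- There are exactly three quandles on a three-element set up to isomorphism:
E₃, R₃, and P₃. -/
theorem three_element_quandle_classification :
    (∀ q : QuandleStr (Fin 3), QIso q E3 ∨ QIso q R3 ∨ QIso q P3) ∧
    ¬QIso E3 R3 ∧ ¬QIso E3 P3 ∧ ¬QIso R3 P3 := by
  refine ⟨qIso_E3_or_R3_or_P3, fun h => ?_, fun h => ?_, fun h => ?_⟩
  · obtain ⟨y, hy⟩ := h.exists_actsTrivially_iff.1 ⟨0, E3_actsTrivially 0⟩
    exact R3_not_actsTrivially y hy
  · exact (P3_actsTrivially_iff 0).1 (h.forall_actsTrivially_iff.1 E3_actsTrivially 0) rfl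
  · obtain ⟨y, hy⟩ := h.exists_actsTrivially_iff.2 ⟨1, (P3_actsTrivially_iff 1).2 (by decide)⟩
    exact R3_not_actsTrivially y hy
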